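/- For every integer n ≥ 1, Λ_n = (1/2) log(2π) + (−1)^n [ ∑_{m=1}^{n} (−1)^m A_{nm} log( |B_{2m}| / (2m−3)!! ) + (1/(2 A_{n0})) log(2π) ]. -/

import Mathlib

open scoped Real

/-- `oddDF j` represents the odd double factorial `(2j-1)!! = 1 · 3 ⋯ (2j-1)`,
with `oddDF 0 = (-1)!! = 1`. -/
noncomputable def oddDF (j : ℕ) : ℝ := ∏ k ∈ Finset.range j, (2 * (k : ℝ) + 1)

/-- `A n m` is the coefficient
`A_{nm} := 2^{−2n}/(2m−1) · C(2(n+m), n+m) · C(n+m, 2m)`. -/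
noncomputable def A (n m : ℕ) : ℝ :=
  (2 : ℝ) ^ (-(2 * n : ℤ)) / (2 * (m : ℝ) - 1) * (Nat.choose (2 * (n + m)) (n + m)) *
    (Nat.choose (n + m) (2 * m))

/-- `Λ n := (−1)^n ∑_{m=1}^{n} (−1)^m A_{nm} log( |B_{2m}| (2π)^m / (2m−3)!! )`,
where `(2m−3)!! = oddDF (m-1)`. -/
noncomputable def Lam (n : ℕ) : ℝ :=
  (-1 : ℝ) ^ n * ∑ m ∈ Finset.Icc 1 n, (-1 : ℝ) ^ m * A n m *
    Real.log (|(bernoulli (2 * m) : ℝ)| * (2 * π) ^ m / oddDF (m - 1))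

open Finset

noncomputable def Fc (n m : ℕ) : ℝ :=
  (-1 : ℝ) ^ m * ((2 * n + 2 * m).choose (n + m)) * ((n + m).choose (2 * m))

noncomputable def Wc (n m : ℕ) : ℝ := Fc n m / (2 * (m : ℝ) - 1)

noncomputable def Gc (n : ℕ) : ℕ → ℝ
  | 0 => 0
  | (m + 1) => (-1 : ℝ) ^ m * (4 * (n : ℝ) + 3) * (2 * (m : ℝ) + 1) *
      ((2 * n + 2 * m + 2).choose (n + m + 1)) * ((n + m + 1).choose (2 * m + 1)) /
      (((n : ℝ) + 1) * (2 * (n : ℝ) + 1))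

lemma Gc_zero (n : ℕ) : Gc n 0 = 0 := rfl

lemma Gc_succ (n m : ℕ) : Gc n (m + 1) = (-1 : ℝ) ^ m * (4 * (n : ℝ) + 3) * (2 * (m : ℝ) + 1) *
      ((2 * n + 2 * m + 2).choose (n + m + 1)) * ((n + m + 1).choose (2 * m + 1)) /
      (((n : ℝ) + 1) * (2 * (n : ℝ) + 1)) := rfl

lemma hA (j : ℕ) : ((j : ℝ) + 1) * ((2 * j + 2).choose (j + 1)) =
    2 * (2 * (j : ℝ) + 1) * ((2 * j).choose j) := by
  have h := Nat.succ_mul_centralBinom_succ j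
  unfold Nat.centralBinom at h
  have e : 2 * (j + 1) = 2 * j + 2 := by ring
  rw [e] at h
  exact_mod_cast congrArg (Nat.cast : ℕ → ℝ) h

lemma hB (s r : ℕ) : ((s : ℝ) + 1 - r) * ((s + 1).choose r) = ((s : ℝ) + 1) * (s.choose r) := by
  rcases le_or_gt r (s + 1) with h | h
  · have h1 := Nat.choose_succ_right_eq (s + 1) r
    have h2 := Nat.add_one_mul_choose_eq s r
    have h3 : (s + 1).choose r * (s + 1 - r) = (s + 1) * s.choose r := by
      rw [← h1]; exact h2.symm
    have hcast : (((s + 1).choose r : ℝ)) * (((s:ℝ) + 1) - r) = ((s:ℝ) + 1) * (s.choose r) := by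
      have := congrArg (Nat.cast : ℕ → ℝ) h3
      push_cast [Nat.cast_sub h] at this
      convert this using 2 <;> push_cast <;> ring
    linarith [hcast]
  · rw [Nat.choose_eq_zero_of_lt h, Nat.choose_eq_zero_of_lt (by omega)]
    simp

lemma hC (s r : ℕ) : ((r : ℝ) + 1) * (s.choose (r + 1)) = ((s : ℝ) - r) * (s.choose r) := by
  rcases le_or_gt r s with h | h
  · have h1 := Nat.choose_succ_right_eq s r
    have := congrArg (Nat.cast : ℕ → ℝ) h1
    push_cast [Nat.cast_sub h] at this
    linarith [this]
  · rw [Nat.choose_eq_zero_of_lt h, Nat.choose_eq_zero_of_lt (by omega)]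
    simp

lemma L1 (n m : ℕ) : ((n : ℝ) + 1 - m) * Fc (n + 1) m = (4 * n + 4 * m + 2) * Fc n m := by
  have h1 := hA (n + m)
  have h2 := hB (n + m) (2 * m)
  have e1 : 2 * (n + m) + 2 = 2 * (n + 1) + 2 * m := by ring
  have e2 : (n + m) + 1 = (n + 1) + m := by ring
  have e0 : 2 * (n + m) = 2 * n + 2 * m := by ring
  rw [e1, e2, e0] at h1
  rw [e2] at h2
  unfold Fc
  have hne : ((n : ℝ) + m + 1) ≠ 0 := by positivity
  apply mul_left_cancel₀ hne
  push_cast at h1 h2 ⊢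
  linear_combination ((-1:ℝ)^m * ((n:ℝ) + 1 - m) * (((n+1) + m).choose (2*m) : ℝ)) * h1 +
    ((-1:ℝ)^m * 2 * (2*(n:ℝ) + 2*m + 1) * (((2*n + 2*m).choose (n+m)) : ℝ)) * h2

lemma L2 (n m : ℕ) : Fc (n + 1) m + 4 * Fc n m = Gc n (m + 1) - Gc n m := by
  have hd : ((n : ℝ) + 1) * (2 * (n : ℝ) + 1) ≠ 0 := by positivity
  rcases m with _ | k
  · -- m = 0
    rw [Gc_zero, Gc_succ]
    unfold Fc
    simp only [Nat.choose_one_right, Nat.choose_zero_right, Nat.mul_zero, Nat.add_zero, pow_zero,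
      Nat.choose_self, Nat.cast_one]
    rw [show 2 * (n + 1) = 2 * n + 2 from by ring]
    have h1 := hA n
    push_cast
    field_simp
    simp only [Nat.choose_one_right, Nat.cast_add, Nat.cast_one]
    linear_combination (-(2*(n:ℝ)+2)) * h1
  · -- m = k + 1
    rw [Gc_succ n (k + 1), Gc_succ n k]
    unfold Fc
    rw [show 2 * (n + 1) + 2 * (k + 1) = 2 * n + 2 * k + 4 from by ring,
      show 2 * n + 2 * (k + 1) + 2 = 2 * n + 2 * k + 4 from by ring,
      show 2 * n + 2 * (k + 1) = 2 * n + 2 * k + 2 from by ring,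
      show (n + 1) + (k + 1) = n + k + 2 from by ring,
      show n + (k + 1) + 1 = n + k + 2 from by ring,
      show n + (k + 1) = n + k + 1 from by ring,
      show 2 * (k + 1) + 1 = 2 * k + 3 from by ring,
      show 2 * (k + 1) = 2 * k + 2 from by ring]
    rcases lt_trichotomy k n with hk | hk | hk
    · -- main case k < n
      have r1 := hA (n + k + 1)
      rw [show 2 * (n + k + 1) + 2 = 2 * n + 2 * k + 4 from by ring,
        show (n + k + 1) + 1 = n + k + 2 from by ring,
        show 2 * (n + k + 1) = 2 * n + 2 * k + 2 from by ring] at r1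
      have r2 := hB (n + k + 1) (2 * k + 2)
      rw [show (n + k + 1) + 1 = n + k + 2 from by ring] at r2
      have r3 := hC (n + k + 1) (2 * k + 1)
      rw [show (2 * k + 1) + 1 = 2 * k + 2 from by ring] at r3
      have r4 := hC (n + k + 2) (2 * k + 2)
      rw [show (2 * k + 2) + 1 = 2 * k + 3 from by ring] at r4
      push_cast at r1 r2 r3 r4 ⊢
      have hnk : ((n : ℝ) - k) ≠ 0 := by
        have : (k : ℝ) + 1 ≤ n := by exact_mod_cast hk
        nlinarith
      have hnk2 : ((n : ℝ) + k + 2) ≠ 0 := by positivity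
      have h2k3 : (2 * (k : ℝ) + 3) ≠ 0 := by positivity
      have e4 : (((n + k + 2).choose (2 * k + 3) : ℕ) : ℝ) =
          ((n : ℝ) - k) * ((n + k + 2).choose (2 * k + 2)) / (2 * (k : ℝ) + 3) := by
        field_simp
        linear_combination r4
      have e1 : (((2 * n + 2 * k + 4).choose (n + k + 2) : ℕ) : ℝ) =
          2 * (2 * (n : ℝ) + 2 * k + 3) * ((2 * n + 2 * k + 2).choose (n + k + 1)) /
            ((n : ℝ) + k + 2) := by
        field_simp
        linear_combination r1
      have e2 : (((n + k + 2).choose (2 * k + 2) : ℕ) : ℝ) =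
          ((n : ℝ) + k + 2) * ((n + k + 1).choose (2 * k + 2)) / ((n : ℝ) - k) := by
        field_simp
        linear_combination r2
      have e3 : (((n + k + 1).choose (2 * k + 1) : ℕ) : ℝ) =
          (2 * (k : ℝ) + 2) * ((n + k + 1).choose (2 * k + 2)) / ((n : ℝ) - k) := by
        field_simp
        linear_combination -r3
      rw [e4, e1, e2, e3]
      field_simp
      ring
    · -- k = n
      subst hk
      rw [show (k + k + 1 : ℕ) = 2 * k + 1 from by ring,
        show (k + k + 2 : ℕ) = 2 * k + 2 from by ring,
        show (2 * k + 2 * k + 2 : ℕ) = 4 * k + 2 from by ring,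
        show (2 * k + 2 * k + 4 : ℕ) = 4 * k + 4 from by ring]
      rw [Nat.choose_self, Nat.choose_eq_zero_of_lt (show 2 * k + 1 < 2 * k + 2 from by omega),
        Nat.choose_eq_zero_of_lt (show 2 * k + 2 < 2 * k + 3 from by omega),
        Nat.choose_self]
      have r1 := hA (2 * k + 1)
      rw [show 2 * (2 * k + 1) + 2 = 4 * k + 4 from by ring,
        show (2 * k + 1) + 1 = 2 * k + 2 from by ring,
        show 2 * (2 * k + 1) = 4 * k + 2 from by ring] at r1
      push_cast at r1 ⊢
      have key : ((k:ℝ) + 1) * (((4 * k + 4).choose (2 * k + 2) : ℕ) : ℝ)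
          = (4 * (k:ℝ) + 3) * (((4 * k + 2).choose (2 * k + 1) : ℕ) : ℝ) := by linarith
      rw [div_sub_div_same, eq_div_iff hd]
      linear_combination (-(-1:ℝ)^k * (2 * (k:ℝ) + 1)) * key
    · -- n < k : everything vanishes
      rw [Nat.choose_eq_zero_of_lt (show n + k + 2 < 2 * k + 2 from by omega),
        Nat.choose_eq_zero_of_lt (show n + k + 1 < 2 * k + 2 from by omega),
        Nat.choose_eq_zero_of_lt (show n + k + 2 < 2 * k + 3 from by omega),
        Nat.choose_eq_zero_of_lt (show n + k + 1 < 2 * k + 1 from by omega)]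
      simp

lemma two_m_sub_one_ne (m : ℕ) : (2 * (m : ℝ) - 1) ≠ 0 := by
  rcases Nat.eq_zero_or_pos m with h | h
  · simp [h]
  · have : (1 : ℝ) ≤ m := by exact_mod_cast h
    nlinarith

lemma K2 (n m : ℕ) : (2 * (n : ℝ) + 1) * Wc (n + 1) m - 8 * ((n : ℝ) + 1) * Wc n m =
    Gc n (m + 1) - Gc n m := by
  have hm := two_m_sub_one_ne m
  have l1 := L1 n m
  have l2 := L2 n m
  rw [← l2]
  unfold Wc
  field_simp
  linear_combination 2 * l1

lemma Fc_zero (n m : ℕ) (h : n < m) : Fc n m = 0 := by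
  unfold Fc
  rw [show ((n + m).choose (2 * m)) = 0 from Nat.choose_eq_zero_of_lt (by omega)]
  simp

lemma Gc_top (n : ℕ) : Gc n (n + 2) = 0 := by
  have : Gc n ((n + 1) + 1) = 0 := by
    rw [Gc_succ]
    rw [show ((n + (n + 1) + 1).choose (2 * (n + 1) + 1)) = 0 from
      Nat.choose_eq_zero_of_lt (by omega)]
    simp
  exact this

lemma Vsum (n : ℕ) : ∑ m ∈ range (n + 1), Fc n m = (-4 : ℝ) ^ n := by
  induction n with
  | zero => simp [Fc]
  | succ n ih =>
    have tel : ∑ m ∈ range (n + 2), (Gc n (m + 1) - Gc n m) = 0 := by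
      rw [Finset.sum_range_sub (Gc n) (n + 2), Gc_top, Gc_zero]
      ring
    have step : ∑ m ∈ range (n + 2), (Fc (n + 1) m + 4 * Fc n m) = 0 := by
      rw [Finset.sum_congr rfl fun m _ => L2 n m, tel]
    have split : ∑ m ∈ range (n + 2), (Fc (n + 1) m + 4 * Fc n m) =
        (∑ m ∈ range (n + 2), Fc (n + 1) m) + 4 * ∑ m ∈ range (n + 2), Fc n m := by
      rw [Finset.sum_add_distrib, Finset.mul_sum]
    have last : ∑ m ∈ range (n + 2), Fc n m = ∑ m ∈ range (n + 1), Fc n m := by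
      rw [Finset.sum_range_succ, Fc_zero n (n + 1) (by omega), add_zero]
    rw [split, last, ih] at step
    have h4 : ∑ m ∈ range (n + 2), Fc (n + 1) m = -4 * (-4 : ℝ) ^ n := by linarith
    rw [h4]; ring

lemma Usum (n : ℕ) : ((2 * n).choose n : ℝ) * ∑ m ∈ range (n + 1), Wc n m = -(16 : ℝ) ^ n := by
  induction n with
  | zero => simp [Wc, Fc]
  | succ n ih =>
    have tel : ∑ m ∈ range (n + 2), (Gc n (m + 1) - Gc n m) = 0 := by
      rw [Finset.sum_range_sub (Gc n) (n + 2), Gc_top, Gc_zero]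
      ring
    have step : ∑ m ∈ range (n + 2),
        ((2 * (n : ℝ) + 1) * Wc (n + 1) m - 8 * ((n : ℝ) + 1) * Wc n m) = 0 := by
      rw [Finset.sum_congr rfl fun m _ => K2 n m, tel]
    have split : ∑ m ∈ range (n + 2),
        ((2 * (n : ℝ) + 1) * Wc (n + 1) m - 8 * ((n : ℝ) + 1) * Wc n m) =
        (2 * (n : ℝ) + 1) * (∑ m ∈ range (n + 2), Wc (n + 1) m)
          - 8 * ((n : ℝ) + 1) * ∑ m ∈ range (n + 2), Wc n m := by
      rw [Finset.sum_sub_distrib, Finset.mul_sum, Finset.mul_sum]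
    have wlast : Wc n (n + 1) = 0 := by
      rw [Wc, Fc_zero n (n + 1) (by omega)]; simp
    have last : ∑ m ∈ range (n + 2), Wc n m = ∑ m ∈ range (n + 1), Wc n m := by
      rw [Finset.sum_range_succ, wlast, add_zero]
    rw [split, last] at step
    have h2n1 : (2 * (n : ℝ) + 1) ≠ 0 := by positivity
    have hS' : (2 * (n : ℝ) + 1) * (∑ m ∈ range (n + 2), Wc (n + 1) m)
        = 8 * ((n : ℝ) + 1) * ∑ m ∈ range (n + 1), Wc n m := by linarith
    rw [show 2 * (n + 1) = 2 * n + 2 from by ring]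
    apply mul_left_cancel₀ h2n1
    calc (2 * (n : ℝ) + 1) * (((2 * n + 2).choose (n + 1) : ℝ) *
        ∑ m ∈ range (n + 2), Wc (n + 1) m)
        = ((2 * n + 2).choose (n + 1) : ℝ) * ((2 * (n : ℝ) + 1) *
          ∑ m ∈ range (n + 2), Wc (n + 1) m) := by ring
      _ = ((2 * n + 2).choose (n + 1) : ℝ) * (8 * ((n : ℝ) + 1) *
          ∑ m ∈ range (n + 1), Wc n m) := by rw [hS']
      _ = 8 * (((n : ℝ) + 1) * ((2 * n + 2).choose (n + 1) : ℝ)) *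
          ∑ m ∈ range (n + 1), Wc n m := by ring
      _ = 8 * (2 * (2 * (n : ℝ) + 1) * ((2 * n).choose n : ℝ)) *
          ∑ m ∈ range (n + 1), Wc n m := by rw [hA n]
      _ = (2 * (n : ℝ) + 1) * (16 * (((2 * n).choose n : ℝ) *
          ∑ m ∈ range (n + 1), Wc n m)) := by ring
      _ = (2 * (n : ℝ) + 1) * -(16 : ℝ) ^ (n + 1) := by rw [ih]; ring

lemma pow_two_neg_two_n (n : ℕ) : (2 : ℝ) ^ (-(2 * n : ℤ)) = ((4 : ℝ) ^ n)⁻¹ := by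
  rw [zpow_neg]
  congr 1
  rw [show ((2 * n : ℤ)) = ((2 * n : ℕ) : ℤ) from by push_cast; ring, zpow_natCast,
    pow_mul]
  norm_num

lemma A_eq (n m : ℕ) : A n m = ((4 : ℝ) ^ n)⁻¹ / (2 * (m : ℝ) - 1) *
    (((2 * n + 2 * m).choose (n + m) : ℝ)) * (((n + m).choose (2 * m) : ℝ)) := by
  unfold A
  rw [pow_two_neg_two_n, show 2 * (n + m) = 2 * n + 2 * m from by ring]

lemma A_zero (n : ℕ) : A n 0 = -((4 : ℝ) ^ n)⁻¹ * ((2 * n).choose n : ℝ) := by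
  rw [A_eq]
  simp
  ring

lemma point (n m : ℕ) : (-1 : ℝ) ^ m * (m : ℝ) * A n m =
    ((4 : ℝ) ^ n)⁻¹ / 2 * (Fc n m + Wc n m) := by
  have hm := two_m_sub_one_ne m
  rw [A_eq]
  unfold Wc Fc
  have h4 : ((4 : ℝ) ^ n) ≠ 0 := by positivity
  field_simp
  have hm' : (m : ℝ) * 2 - 1 ≠ 0 := by rw [mul_comm]; exact hm
  field_simp
  ring

lemma sum_shift (f : ℕ → ℝ) (n : ℕ) (h0 : f 0 = 0) :
    ∑ m ∈ Finset.Icc 1 n, f m = ∑ m ∈ range (n + 1), f m := by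
  apply Finset.sum_subset
  · intro x hx
    simp only [Finset.mem_Icc] at hx
    simp only [Finset.mem_range]
    omega
  · intro x hx hnx
    simp only [Finset.mem_range] at hx
    simp only [Finset.mem_Icc] at hnx
    have : x = 0 := by omega
    rw [this, h0]

lemma Esum (n : ℕ) : ∑ m ∈ Finset.Icc 1 n, (-1 : ℝ) ^ m * (m : ℝ) * A n m =
    (-1 : ℝ) ^ n / 2 + 1 / (2 * A n 0) := by
  have hC2 : ((2 * n).choose n : ℝ) ≠ 0 := by
    have := Nat.choose_pos (show n ≤ 2 * n from by omega)
    positivity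
  have h4 : ((4 : ℝ) ^ n) ≠ 0 := by positivity
  have hs : ∑ m ∈ Finset.Icc 1 n, (-1 : ℝ) ^ m * (m : ℝ) * A n m
      = ∑ m ∈ range (n + 1), (-1 : ℝ) ^ m * (m : ℝ) * A n m := by
    apply sum_shift
    simp
  rw [hs, Finset.sum_congr rfl fun m _ => point n m, ← Finset.mul_sum,
    Finset.sum_add_distrib]
  have hU : ∑ m ∈ range (n + 1), Wc n m = -(16 : ℝ) ^ n / ((2 * n).choose n : ℝ) := by
    rw [eq_div_iff hC2]
    linear_combination Usum n
  rw [Vsum n, hU, A_zero]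
  have e16 : (16 : ℝ) ^ n = 4 ^ n * 4 ^ n := by
    rw [← mul_pow]; norm_num
  have e4 : (-4 : ℝ) ^ n = (-1) ^ n * 4 ^ n := by
    rw [← neg_one_mul, mul_pow]
  rw [e16, e4]
  field_simp

lemma bern_ne (m : ℕ) (hm : m ≠ 0) : ((bernoulli (2 * m) : ℚ) : ℝ) ≠ 0 := by
  intro h0
  have hs := hasSum_zeta_nat hm
  rw [h0] at hs
  simp only [mul_zero, zero_div] at hs
  have h1 := le_hasSum hs 1 (fun j _ => by positivity)
  norm_num at h1

lemma oddDF_pos (j : ℕ) : 0 < oddDF j := by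
  unfold oddDF
  apply Finset.prod_pos
  intro k _
  positivity


/-- For every `n ≥ 1`,
`Λ_n = (1/2) log(2π) + (−1)^n [ ∑_{m=1}^{n} (−1)^m A_{nm} log(|B_{2m}|/(2m−3)!!) + (1/(2A_{n0})) log(2π) ]`. -/
theorem Lam_partial_summed (n : ℕ) (hn : 1 ≤ n) :
    Lam n = (1 / 2) * Real.log (2 * π) + (-1 : ℝ) ^ n *
      ((∑ m ∈ Finset.Icc 1 n, (-1 : ℝ) ^ m * A n m *
          Real.log (|(bernoulli (2 * m) : ℝ)| / oddDF (m - 1)))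
        + (1 / (2 * A n 0)) * Real.log (2 * π)) := by
  have key : ∀ m ∈ Finset.Icc 1 n, (-1 : ℝ) ^ m * A n m *
      Real.log (|(bernoulli (2 * m) : ℝ)| * (2 * π) ^ m / oddDF (m - 1)) =
      (-1 : ℝ) ^ m * A n m * Real.log (|(bernoulli (2 * m) : ℝ)| / oddDF (m - 1))
        + ((-1 : ℝ) ^ m * (m : ℝ) * A n m) * Real.log (2 * π) := by
    intro m hm
    rw [Finset.mem_Icc] at hm
    have hb : |(bernoulli (2 * m) : ℝ)| ≠ 0 := abs_ne_zero.mpr (bern_ne m (by omega))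
    have hD := oddDF_pos (m - 1)
    have hbD : |(bernoulli (2 * m) : ℝ)| / oddDF (m - 1) ≠ 0 := by
      exact div_ne_zero hb hD.ne'
    have hpi : (2 * π) ^ m ≠ 0 := by
      have := Real.pi_pos; positivity
    rw [show |(bernoulli (2 * m) : ℝ)| * (2 * π) ^ m / oddDF (m - 1) =
      (|(bernoulli (2 * m) : ℝ)| / oddDF (m - 1)) * (2 * π) ^ m from by ring,
      Real.log_mul hbD hpi, Real.log_pow]
    ring
  unfold Lam
  rw [Finset.sum_congr rfl key, Finset.sum_add_distrib, ← Finset.sum_mul, Esum n]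
  have hsq : (-1 : ℝ) ^ n * (-1 : ℝ) ^ n = 1 := by
    rw [← pow_add]
    exact Even.neg_one_pow ⟨n, by ring⟩
  linear_combination (Real.log (2 * π) / 2) * hsq
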